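/- Let r(L, δ) = (22L − 10 − (35L − 25)δ)/(35L² − 50L + 75) be the human's best response to machine policy m = Lh + δ. Let h = r(L,0), m = Lh, h' = r(L,δ), m' = Lh' + δ with δ ≠ 0 and L ≠ 3. Then (h' − h)/(m' − m) = (7L − 5)/(5L − 15). -/

import Mathlib

noncomputable def r (L δ : ℝ) : ℝ :=
  (22*L - 10 - (35*L - 25)*δ) / (35*L^2 - 50*L + 75)

/-! Both action differences are `δ / (35L² - 50L + 75)` times a linear polynomial in `L`, so
`δ` and the common denominator cancel in their ratio. -/

lemma r_denom_pos (L : ℝ) : 0 < 35*L^2 - 50*L + 75 := by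
  nlinarith [sq_nonneg (7*L - 5)]

lemma r_sub_r_zero (L δ : ℝ) :
    r L δ - r L 0 = (25 - 35*L) * δ / (35*L^2 - 50*L + 75) := by
  unfold r
  ring

lemma machine_action_sub (L δ : ℝ) :
    (L * r L δ + δ) - L * r L 0 = (75 - 25*L) * δ / (35*L^2 - 50*L + 75) := by
  rw [show L * r L δ + δ - L * r L 0 = L * (r L δ - r L 0) + δ by ring, r_sub_r_zero,
    mul_div_assoc', div_add' _ _ _ (r_denom_pos L).ne']
  ring

theorem stmt_8_general (L δ : ℝ) (hδ : δ ≠ 0) :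
    (r L δ - r L 0) / ((L * r L δ + δ) - L * r L 0) = (7*L - 5)/(5*L - 15) := by
  rw [r_sub_r_zero, machine_action_sub, div_div_div_cancel_right₀ (r_denom_pos L).ne',
    mul_div_mul_right _ _ hδ]
  calc (25 - 35*L) / (75 - 25*L) = (-5) * (7*L - 5) / ((-5) * (5*L - 15)) := by ring
    _ = (7*L - 5) / (5*L - 15) := mul_div_mul_left _ _ (by norm_num)

theorem stmt_8 (L δ : ℝ) (hδ : δ ≠ 0) (hL : L ≠ 3) :
    (r L δ - r L 0) / ((L * r L δ + δ) - L * r L 0) = (7*L - 5)/(5*L - 15) :=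
  stmt_8_general L δ hδ
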